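/- arXiv:math/0012027 — 4 statements merged into one kernel-verified Lean document; each statement's English description precedes it below -/
import Mathlib

section
/- (Theorem 3.1, forward direction, for the Euclidean metric.) Let λ ≠ 0 be real, U ⊆ ℝ³ open, and A : U → ℝ³ twice continuously differentiable with ‖A(p)‖ = 1 and curl A(p) = 2λ A(p) for all p ∈ U (i.e. the dual 1-form α satisfies the adaptedness condition dα = 2λ∗α, |α| = 1). Then: (i) (D A)(p)(A(p)) = 0 for all p, so the congruence of integral curves of A is geodesic; (ii) div A = 0 on U, so the congruence is divergence-free; and (iii) ‖curl A(p)‖ = 2|λ| for all p, so the twist of the congruence is the nonzero constant |λ|. -/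
noncomputable section

/-- ℝ³ with the Euclidean metric. -/
abbrev E3 := EuclideanSpace ℝ (Fin 3)

/-- The `i`-th component of a vector field on `E3`. -/
def comp3 (A : E3 → E3) (i : Fin 3) (p : E3) : ℝ := (WithLp.equiv 2 (Fin 3 → ℝ)) (A p) i

/-- Partial derivative in the `i`-th coordinate direction. -/
def pd3 (i : Fin 3) (f : E3 → ℝ) (p : E3) : ℝ := fderiv ℝ f p (EuclideanSpace.single i 1)

/-- The curl of a vector field on Euclidean ℝ³. -/
def curl3 (A : E3 → E3) (p : E3) : E3 :=
  (WithLp.equiv 2 (Fin 3 → ℝ)).symm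
    ![pd3 1 (comp3 A 2) p - pd3 2 (comp3 A 1) p,
      pd3 2 (comp3 A 0) p - pd3 0 (comp3 A 2) p,
      pd3 0 (comp3 A 1) p - pd3 1 (comp3 A 0) p]

/-- The divergence of a vector field on Euclidean ℝ³. -/
def div3 (A : E3 → E3) (p : E3) : ℝ :=
  pd3 0 (comp3 A 0) p + pd3 1 (comp3 A 1) p + pd3 2 (comp3 A 2) p

open Filter Topology

/-! Differentiating `‖A‖² = 1` gives `(DA)ᵀA = 0`. Since `DA - (DA)ᵀ` is the cross product with
`curl A`, and `curl A = 2λA` is parallel to `A`, also `(DA)A = 0`: the integral curves are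
geodesics. Taking the divergence of `curl A = 2λA` and using `div ∘ curl = 0` (symmetry of second
derivatives) gives `2λ div A = 0`, and `‖curl A‖ = ‖2λA‖ = 2|λ|`. -/

lemma ContinuousLinearMap.apply_eq_sum_smul_single {ι F : Type*} [Fintype ι] [DecidableEq ι]
    [NormedAddCommGroup F] [NormedSpace ℝ F] (L : EuclideanSpace ℝ ι →L[ℝ] F)
    (v : EuclideanSpace ℝ ι) : L v = ∑ i, v i • L (EuclideanSpace.single i 1) := by
  conv_lhs => rw [← (EuclideanSpace.basisFun ι ℝ).sum_repr v]
  simp [map_sum, map_smul]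

lemma inner_fderiv_eq_zero_of_norm_eq_one {E F : Type*} [NormedAddCommGroup E] [NormedSpace ℝ E]
    [NormedAddCommGroup F] [InnerProductSpace ℝ F] {A : E → F} {p : E}
    (hA : DifferentiableAt ℝ A p) (hunit : ∀ᶠ q in 𝓝 p, ‖A q‖ = 1) (v : E) :
    inner ℝ (A p) (fderiv ℝ A p v) = 0 := by
  have hconst : (fun q => inner ℝ (A q) (A q)) =ᶠ[𝓝 p] fun _ => (1 : ℝ) := by
    filter_upwards [hunit] with q hq
    rw [real_inner_self_eq_norm_sq, hq, one_pow]
  have h := fderiv_inner_apply ℝ hA hA v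
  rw [hconst.fderiv_eq, fderiv_const_apply, real_inner_comm (A p)] at h
  simpa using h.symm

lemma pd3_comp3 {A : E3 → E3} {p : E3} (hA : DifferentiableAt ℝ A p) (i j : Fin 3) :
    pd3 i (comp3 A j) p = fderiv ℝ A p (EuclideanSpace.single i 1) j := by
  have h := (EuclideanSpace.proj j : E3 →L[ℝ] ℝ).hasFDerivAt.comp p hA.hasFDerivAt
  rw [pd3, show comp3 A j = EuclideanSpace.proj j ∘ A from rfl, h.fderiv]
  rfl

lemma fderiv_apply_self_eq_zero_of_curl3_eq_smul {A : E3 → E3} {p : E3} {c : ℝ}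
    (hA : DifferentiableAt ℝ A p) (hunit : ∀ᶠ q in 𝓝 p, ‖A q‖ = 1)
    (hcurl : curl3 A p = c • A p) : fderiv ℝ A p (A p) = 0 := by
  set J : Fin 3 → Fin 3 → ℝ := fun i j => fderiv ℝ A p (EuclideanSpace.single j 1) i with hJ
  have horth (j : Fin 3) : A p 0 * J 0 j + A p 1 * J 1 j + A p 2 * J 2 j = 0 := by
    simpa [PiLp.inner_apply, Fin.sum_univ_three, mul_comm] using
      inner_fderiv_eq_zero_of_norm_eq_one hA hunit (EuclideanSpace.single j 1)
  have hcurl_apply (k : Fin 3) : curl3 A p k = c * A p k := by rw [hcurl]; rfl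
  have hc0 : J 2 1 - J 1 2 = c * A p 0 := by simpa [curl3, pd3_comp3 hA] using hcurl_apply 0
  have hc1 : J 0 2 - J 2 0 = c * A p 1 := by simpa [curl3, pd3_comp3 hA] using hcurl_apply 1
  have hc2 : J 1 0 - J 0 1 = c * A p 2 := by simpa [curl3, pd3_comp3 hA] using hcurl_apply 2
  have hDA (i : Fin 3) : fderiv ℝ A p (A p) i = A p 0 * J i 0 + A p 1 * J i 1 + A p 2 * J i 2 := by
    simp [(fderiv ℝ A p).apply_eq_sum_smul_single (A p), Fin.sum_univ_three, hJ]
  -- `(DA)A = (DA)ᵀA + curl A × A`: the first term vanishes by `horth`, the second as `curl A ∥ A`.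
  ext i
  fin_cases i <;> simp only [Fin.zero_eta, Fin.mk_one, Fin.reduceFinMk, PiLp.zero_apply, hDA]
  · linear_combination horth 0 - A p 1 * hc2 + A p 2 * hc1
  · linear_combination horth 1 + A p 0 * hc2 - A p 2 * hc0
  · linear_combination horth 2 - A p 0 * hc1 + A p 1 * hc0

lemma contDiffAt_comp3 {A : E3 → E3} {p : E3} {n : WithTop ℕ∞} (hA : ContDiffAt ℝ n A p)
    (i : Fin 3) : ContDiffAt ℝ n (comp3 A i) p :=
  (EuclideanSpace.proj i : E3 →L[ℝ] ℝ).contDiff.contDiffAt.comp p hA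

lemma pd3_congr {f g : E3 → ℝ} {p : E3} (h : f =ᶠ[𝓝 p] g) (i : Fin 3) :
    pd3 i f p = pd3 i g p := by
  rw [pd3, pd3, h.fderiv_eq]

lemma pd3_sub {f g : E3 → ℝ} {p : E3} (hf : DifferentiableAt ℝ f p)
    (hg : DifferentiableAt ℝ g p) (i : Fin 3) :
    pd3 i (fun q => f q - g q) p = pd3 i f p - pd3 i g p := by
  simp [pd3, fderiv_fun_sub hf hg]

lemma pd3_const_mul {f : E3 → ℝ} {p : E3} (hf : DifferentiableAt ℝ f p) (c : ℝ) (i : Fin 3) :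
    pd3 i (fun q => c * f q) p = c * pd3 i f p := by
  simp [pd3, fderiv_const_mul hf]

lemma hasFDerivAt_pd3 {g : E3 → ℝ} {p : E3} (hg : DifferentiableAt ℝ (fderiv ℝ g) p)
    (i : Fin 3) : HasFDerivAt (pd3 i g)
      ((ContinuousLinearMap.apply ℝ ℝ (EuclideanSpace.single i 1)).comp
        (fderiv ℝ (fderiv ℝ g) p)) p := by
  exact (ContinuousLinearMap.apply ℝ ℝ _).hasFDerivAt.comp p hg.hasFDerivAt

lemma ContDiffAt.differentiableAt_fderiv {𝕜 E F : Type*} [NontriviallyNormedField 𝕜]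
    [NormedAddCommGroup E] [NormedSpace 𝕜 E] [NormedAddCommGroup F] [NormedSpace 𝕜 F]
    {f : E → F} {x : E} (hf : ContDiffAt 𝕜 2 f x) : DifferentiableAt 𝕜 (fderiv 𝕜 f) x :=
  (hf.fderiv_right (m := 1) (by norm_num)).differentiableAt one_ne_zero

lemma pd3_pd3_comm {g : E3 → ℝ} {p : E3} (hg : ContDiffAt ℝ 2 g p) (i j : Fin 3) :
    pd3 i (pd3 j g) p = pd3 j (pd3 i g) p := by
  have hd := hg.differentiableAt_fderiv
  rw [pd3, pd3, (hasFDerivAt_pd3 hd j).fderiv, (hasFDerivAt_pd3 hd i).fderiv]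
  exact hg.isSymmSndFDerivAt (by simp [minSmoothness_of_isRCLikeNormedField]) _ _

lemma div3_curl3 {A : E3 → E3} {p : E3} (hA : ContDiffAt ℝ 2 A p) : div3 (curl3 A) p = 0 := by
  have hC (j : Fin 3) := contDiffAt_comp3 hA j
  have hd (i j : Fin 3) : DifferentiableAt ℝ (pd3 i (comp3 A j)) p :=
    (hasFDerivAt_pd3 (hC j).differentiableAt_fderiv i).differentiableAt
  show pd3 0 (fun q => pd3 1 (comp3 A 2) q - pd3 2 (comp3 A 1) q) p
      + pd3 1 (fun q => pd3 2 (comp3 A 0) q - pd3 0 (comp3 A 2) q) p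
      + pd3 2 (fun q => pd3 0 (comp3 A 1) q - pd3 1 (comp3 A 0) q) p = 0
  simp only [pd3_sub (hd _ _) (hd _ _)]
  rw [pd3_pd3_comm (hC 2) 0 1, pd3_pd3_comm (hC 1) 0 2, pd3_pd3_comm (hC 0) 1 2]
  ring

lemma div3_congr {A B : E3 → E3} {p : E3} (h : A =ᶠ[𝓝 p] B) : div3 A p = div3 B p := by
  have hc (i : Fin 3) : comp3 A i =ᶠ[𝓝 p] comp3 B i := by exact h.fun_comp (fun v : E3 => v i)
  simp only [div3, pd3_congr (hc _)]

lemma div3_smul {A : E3 → E3} {p : E3} (hA : DifferentiableAt ℝ A p) (c : ℝ) :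
    div3 (fun q => c • A q) p = c * div3 A p := by
  have hd (i : Fin 3) : DifferentiableAt ℝ (comp3 A i) p :=
    (EuclideanSpace.proj i : E3 →L[ℝ] ℝ).differentiableAt.comp p hA
  simp only [div3, show ∀ i, comp3 (fun q => c • A q) i = fun q => c * comp3 A i q from fun _ => rfl,
    pd3_const_mul (hd _)]
  ring

lemma div3_eq_zero_of_curl3_eq_smul {A : E3 → E3} {p : E3} {c : ℝ} (hA : ContDiffAt ℝ 2 A p)
    (hc : c ≠ 0) (hcurl : ∀ᶠ q in 𝓝 p, curl3 A q = c • A q) : div3 A p = 0 := by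
  have h : c * div3 A p = 0 := by
    rw [← div3_smul (hA.differentiableAt two_ne_zero), ← div3_congr hcurl, div3_curl3 hA]
  exact (mul_eq_zero.mp h).resolve_left hc

/-- Theorem 3.1, forward direction, for the Euclidean metric: a unit vector field dual to an
adapted contact form (`curl A = 2λA`) has geodesic, divergence-free integral curves of constant
nonzero twist `|λ|`. -/
theorem stmt3 (lam : ℝ) (hlam : lam ≠ 0) (U : Set E3) (hU : IsOpen U) (A : E3 → E3)
    (hC2 : ContDiffOn ℝ 2 A U)
    (hunit : ∀ p ∈ U, ‖A p‖ = 1)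
    (hadapted : ∀ p ∈ U, curl3 A p = (2 * lam) • A p) :
    (∀ p ∈ U, fderiv ℝ A p (A p) = 0) ∧
    (∀ p ∈ U, div3 A p = 0) ∧
    (∀ p ∈ U, ‖curl3 A p‖ = 2 * |lam|) := by
  have hA {p} (hp : p ∈ U) : ContDiffAt ℝ 2 A p := (hC2 p hp).contDiffAt (hU.mem_nhds hp)
  refine ⟨fun p hp => ?_, fun p hp => ?_, fun p hp => ?_⟩
  · exact fderiv_apply_self_eq_zero_of_curl3_eq_smul ((hA hp).differentiableAt two_ne_zero)
      (eventually_of_mem (hU.mem_nhds hp) hunit) (hadapted p hp)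
  · exact div3_eq_zero_of_curl3_eq_smul (hA hp) (mul_ne_zero two_ne_zero hlam)
      (eventually_of_mem (hU.mem_nhds hp) hadapted)
  · rw [hadapted p hp, norm_smul, hunit p hp, Real.norm_eq_abs, abs_mul, abs_two, mul_one]

end
end

section
/- Let λ be a nonzero real number. A differentiable function f : ℝ → ℂ satisfies f'(r) = −iλ f(r) + λ · conj(f(r)) for all r ∈ ℝ if and only if there exist real numbers a₀ and b₀ such that f(r) = a₀ + (b₀/λ − a₀)·i + b₀·(1 − i)·r for all r ∈ ℝ. -/
/-! The right-hand side equals `λ (Re f + Im f) (1 - i)`, and the real functional `Re + Im`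
vanishes on `1 - i`. Hence `Re f + Im f` is a first integral, `f'` is constant and `f` is affine;
the constants `a₀ = Re f(0)` and `b₀ = λ (Re f(0) + Im f(0))` are read off at `r = 0`. -/

open Complex ComplexConjugate

theorem eq_add_smul_of_deriv_eq_const {E : Type*} [NormedAddCommGroup E] [NormedSpace ℝ E]
    {f : ℝ → E} {c : E} (hf : Differentiable ℝ f) (hf' : ∀ r, deriv f r = c) (r : ℝ) :
    f r = f 0 + r • c := by
  have hderiv : ∀ x, HasDerivAt (fun x => f x - x • c) 0 x := fun x => by
    have := (hf x).hasDerivAt.sub ((hasDerivAt_id x).smul_const c)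
    rwa [hf', one_smul, sub_self] at this
  have := is_const_of_deriv_eq_zero (fun x => (hderiv x).differentiableAt)
    (fun x => (hderiv x).deriv) r 0
  rwa [zero_smul, sub_zero, sub_eq_iff_eq_add] at this

theorem ContinuousLinearMap.apply_eq_apply_of_apply_deriv_eq_zero {E F : Type*}
    [NormedAddCommGroup E] [NormedSpace ℝ E] [NormedAddCommGroup F] [NormedSpace ℝ F]
    (L : E →L[ℝ] F) {f : ℝ → E} (hf : Differentiable ℝ f) (h : ∀ r, L (deriv f r) = 0)
    (r s : ℝ) : L (f r) = L (f s) := by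
  have hderiv : ∀ x, HasDerivAt (L ∘ f) 0 x := fun x => by
    simpa [h] using L.hasFDerivAt.comp_hasDerivAt x (hf x).hasDerivAt
  exact is_const_of_deriv_eq_zero (fun x => (hderiv x).differentiableAt)
    (fun x => (hderiv x).deriv) r s

theorem neg_I_mul_mul_add_mul_conj (lam : ℝ) (z : ℂ) :
    -(I * lam) * z + lam * conj z = ((lam * (z.re + z.im) : ℝ) : ℂ) * (1 - I) := by
  apply Complex.ext <;> simp <;> ring

/-- General solution of the radial equation `f' = −iλ f + λ · conj f` for the frame coefficients
`Ω` and `ηᵃ` in the flat case of the spin-coefficient field equations. -/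
theorem stmt6 (lam : ℝ) (hlam : lam ≠ 0) (f : ℝ → ℂ) (hf : Differentiable ℝ f) :
    (∀ r : ℝ, deriv f r = -(Complex.I * lam) * f r + (lam : ℂ) * (starRingEnd ℂ) (f r)) ↔
      (∃ a₀ b₀ : ℝ, ∀ r : ℝ,
        f r = (a₀ : ℂ) + ((b₀ / lam : ℝ) - (a₀ : ℝ)) * Complex.I +
          (b₀ : ℂ) * (1 - Complex.I) * (r : ℂ)) := by
  simp only [neg_I_mul_mul_add_mul_conj]
  constructor
  · intro hode
    let L : ℂ →L[ℝ] ℝ := reCLM + imCLM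
    have hL (r : ℝ) : (f r).re + (f r).im = (f 0).re + (f 0).im := by
      simpa [L] using L.apply_eq_apply_of_apply_deriv_eq_zero hf (fun r => by simp [L, hode r]) r 0
    have hf_affine := eq_add_smul_of_deriv_eq_const hf (fun r => by rw [hode r, hL r])
    refine ⟨(f 0).re, lam * ((f 0).re + (f 0).im), fun r => ?_⟩
    rw [hf_affine r, mul_div_cancel_left₀ _ hlam]
    apply Complex.ext <;> simp <;> ring
  · rintro ⟨a₀, b₀, hsol⟩ r
    have hderiv : HasDerivAt f ((b₀ : ℂ) * (1 - I)) r := by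
      rw [funext hsol]
      simpa using ((hasDerivAt_id r).ofReal_comp.const_mul ((b₀ : ℂ) * (1 - I))).const_add
        ((a₀ : ℂ) + ((b₀ / lam : ℝ) - (a₀ : ℝ)) * I)
    rw [hderiv.deriv, hsol r]
    apply Complex.ext <;> simp <;> field_simp <;> ring
end

section
/- Fix real numbers u and k, let s = √(1 + u²), and define F : ℝ → ℝ by F(v) = −(1/√2)·[ v/(1+u²) + ((1+u²+v²)/(1+u²)^{3/2})·arctan(v/√(1+u²)) + k·(1+u²+v²) ]. Then F is differentiable and satisfies the ordinary differential equation (1/2)·(1 + u² + v²)·F'(v) − v·F(v) = −1/√2 for all v ∈ ℝ. -/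
/-!
With `a = 1 + u²`, the function `P v = v / a + (a + v²) / a^{3/2} · arctan (v / √a)` solves
`(1/2)(a + v²) P' − v P = 1`: the `arctan` terms cancel because `a + v²` is annihilated by the
operator, and `d/dv arctan (v / √a) = √a / (a + v²)` turns the rest into `(a + v²)/a − v²/a`.
The operator being linear, `−(1/√2)(P + k (a + v²))` solves the equation with right side `−1/√2`.
-/

open Real

lemma rpow_three_halves {a : ℝ} (ha : 0 ≤ a) : a ^ ((3 : ℝ) / 2) = a * √a := by
  rw [show (3 : ℝ) / 2 = 1 + 1 / 2 by norm_num, rpow_add' ha (by norm_num), rpow_one,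
    ← sqrt_eq_rpow]

lemma hasDerivAt_arctan_div_sqrt {a : ℝ} (ha : 0 < a) (v : ℝ) :
    HasDerivAt (fun x => arctan (x / √a)) (√a / (a + v ^ 2)) v := by
  have hsq : √a ^ 2 = a := sq_sqrt ha.le
  have hsa : 0 < √a := sqrt_pos.mpr ha
  refine ((hasDerivAt_arctan _).comp v ((hasDerivAt_id v).div_const √a)).congr_deriv ?_
  field_simp
  rw [hsq, id]

noncomputable def arctanSolution (a v : ℝ) : ℝ :=
  v / a + (a + v ^ 2) / (a * √a) * arctan (v / √a)

lemma hasDerivAt_arctanSolution {a : ℝ} (ha : 0 < a) (v : ℝ) :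
    HasDerivAt (arctanSolution a) (2 / a + 2 * v / (a * √a) * arctan (v / √a)) v := by
  have hsa : 0 < √a := sqrt_pos.mpr ha
  have hquad : HasDerivAt (fun x : ℝ => a + x ^ 2) (2 * v) v := by
    simpa using (hasDerivAt_pow 2 v).const_add a
  refine (((hasDerivAt_id v).div_const a).add ((hquad.div_const (a * √a)).mul
    (hasDerivAt_arctan_div_sqrt ha v))).congr_deriv ?_
  field_simp
  ring

lemma arctanSolution_ode {a : ℝ} (ha : 0 < a) (v : ℝ) :
    (1 / 2) * (a + v ^ 2) * deriv (arctanSolution a) v - v * arctanSolution a v = 1 := by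
  have hsa : 0 < √a := sqrt_pos.mpr ha
  rw [(hasDerivAt_arctanSolution ha v).deriv, arctanSolution]
  field_simp
  ring

/-- Explicit solution `Ω₀` of the equation `(1/2)(1+u²+v²)Ω₀' − vΩ₀ = −1/√2` in the elliptic
case of the spin-coefficient field equations. -/
theorem stmt9 (u k : ℝ)
    (F : ℝ → ℝ)
    (hF : ∀ v : ℝ, F v = -(1 / Real.sqrt 2) *
      (v / (1 + u ^ 2) +
        ((1 + u ^ 2 + v ^ 2) / (1 + u ^ 2) ^ ((3 : ℝ) / 2)) *
          Real.arctan (v / Real.sqrt (1 + u ^ 2)) +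
        k * (1 + u ^ 2 + v ^ 2))) :
    Differentiable ℝ F ∧
    ∀ v : ℝ, (1 / 2) * (1 + u ^ 2 + v ^ 2) * deriv F v - v * F v = -(1 / Real.sqrt 2) := by
  set a := 1 + u ^ 2
  have ha : 0 < a := by positivity
  have hF' : F = fun v => -(1 / √2) * (arctanSolution a v + k * (a + v ^ 2)) := by
    funext v
    rw [hF, rpow_three_halves ha.le, arctanSolution]
  have hderiv (v : ℝ) : HasDerivAt F
      (-(1 / √2) * (deriv (arctanSolution a) v + k * (2 * v))) v := by
    rw [hF', (hasDerivAt_arctanSolution ha v).deriv]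
    refine ((hasDerivAt_arctanSolution ha v).add ?_).const_mul _
    simpa using ((hasDerivAt_pow 2 v).const_add a).const_mul k
  refine ⟨fun v => (hderiv v).differentiableAt, fun v => ?_⟩
  rw [(hderiv v).deriv, hF']
  linear_combination -(1 / √2) * arctanSolution_ode ha v
end

section
/- (Elliptic case: second explicit coordinate transformation.) Define, on the open set V = {(ρ,θ,φ) : ρ ∈ (0,π), θ ∈ (0, π/2)} ⊆ ℝ³, the map χ(ρ,θ,φ) = (ρ̃, θ̃, φ̃) by ρ̃ = arctan( cos ρ / (sin ρ · cos θ) ), θ̃ = arccos( √(cos²ρ + sin²ρ·cos²θ) ), φ̃ = arctan( cos ρ / (sin ρ · cos θ) ) − φ. Then for every q = (ρ,θ,φ) ∈ V, every λ > 0, and every tangent vector w = (w₁,w₂,w₃) ∈ ℝ³, the quadratic form Q_{(ρ̃,θ̃,φ̃)}(v) = (1/λ²)·[ v₁² + v₂² + sin²θ̃·(v₃² − 2·v₃·v₁) ] pulled back by χ equals the round metric: Q_{χ(q)}( Dχ(q)·w ) = (1/λ²)·[ w₁² + sin²ρ·( w₂² + sin²θ·w₃² ) ]. -/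
/-!
Since `φ̃ = ρ̃ - φ`, the form `dρ̃² + dθ̃² + sin²θ̃ (dφ̃² - 2 dφ̃ dρ̃)` equals
`cos²θ̃ dρ̃² + dθ̃² + sin²θ̃ dφ²`. Writing `A = cos²ρ + sin²ρ cos²θ`, one has `cos²θ̃ = A`,
`sin²θ̃ = 1 - A = sin²ρ sin²θ`, `A dρ̃ = cos ρ sin ρ sin θ dθ - cos θ dρ` and
`√A dθ̃ = cos ρ sin θ dρ + sin ρ cos θ dθ`. Since also `A = (cos ρ sin θ)² + cos²θ`, the
Brahmagupta–Fibonacci identity gives `A dρ̃² + dθ̃² = dρ² + sin²ρ dθ²`.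
-/

open Real

noncomputable section

/-- The coordinate transformation `χ(ρ,θ,φ) = (ρ̃,θ̃,φ̃)` of the elliptic case. -/
def chiMap (q : ℝ × ℝ × ℝ) : ℝ × ℝ × ℝ :=
  (Real.arctan (Real.cos q.1 / (Real.sin q.1 * Real.cos q.2.1)),
   Real.arccos (Real.sqrt (Real.cos q.1 ^ 2 + Real.sin q.1 ^ 2 * Real.cos q.2.1 ^ 2)),
   Real.arctan (Real.cos q.1 / (Real.sin q.1 * Real.cos q.2.1)) - q.2.2)

def dρ : ℝ × ℝ × ℝ →L[ℝ] ℝ := ContinuousLinearMap.fst ℝ ℝ (ℝ × ℝ)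

def dθ : ℝ × ℝ × ℝ →L[ℝ] ℝ :=
  (ContinuousLinearMap.fst ℝ ℝ ℝ).comp (ContinuousLinearMap.snd ℝ ℝ (ℝ × ℝ))

def dφ : ℝ × ℝ × ℝ →L[ℝ] ℝ :=
  (ContinuousLinearMap.snd ℝ ℝ ℝ).comp (ContinuousLinearMap.snd ℝ ℝ (ℝ × ℝ))

@[simp] theorem dρ_apply (w : ℝ × ℝ × ℝ) : dρ w = w.1 := rfl
@[simp] theorem dθ_apply (w : ℝ × ℝ × ℝ) : dθ w = w.2.1 := rfl
@[simp] theorem dφ_apply (w : ℝ × ℝ × ℝ) : dφ w = w.2.2 := rfl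

theorem hasFDerivAt_dρ (q : ℝ × ℝ × ℝ) : HasFDerivAt (fun q : ℝ × ℝ × ℝ => q.1) dρ q :=
  hasFDerivAt_fst

theorem hasFDerivAt_dθ (q : ℝ × ℝ × ℝ) : HasFDerivAt (fun q : ℝ × ℝ × ℝ => q.2.1) dθ q :=
  hasFDerivAt_snd.fst

theorem hasFDerivAt_dφ (q : ℝ × ℝ × ℝ) : HasFDerivAt (fun q : ℝ × ℝ × ℝ => q.2.2) dφ q :=
  hasFDerivAt_snd.snd

theorem cos_sq_add_sin_sq_mul_cos_sq_eq_one_sub (ρ θ : ℝ) :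
    cos ρ ^ 2 + sin ρ ^ 2 * cos θ ^ 2 = 1 - (sin ρ * sin θ) ^ 2 := by
  linear_combination sin ρ ^ 2 * sin_sq_add_cos_sq θ + cos_sq_add_sin_sq ρ

theorem cos_sq_add_sin_sq_mul_cos_sq_pos {ρ θ : ℝ} (h : sin ρ * cos θ ≠ 0) :
    0 < cos ρ ^ 2 + sin ρ ^ 2 * cos θ ^ 2 := by
  have := pow_pos (abs_pos.2 h) 2
  rw [sq_abs, mul_pow] at this
  positivity

theorem hasFDerivAt_chiMap_fst {ρ θ φ : ℝ} (h : sin ρ * cos θ ≠ 0) :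
    HasFDerivAt (fun q => (chiMap q).1)
      ((cos ρ ^ 2 + sin ρ ^ 2 * cos θ ^ 2)⁻¹ • ((cos ρ * sin ρ * sin θ) • dθ - cos θ • dρ))
      (ρ, θ, φ) := by
  have hden := ((hasFDerivAt_dρ (ρ, θ, φ)).sin.fun_mul (hasFDerivAt_dθ (ρ, θ, φ)).cos)
  have := ((hasFDerivAt_dρ (ρ, θ, φ)).cos.fun_mul
    ((hasDerivAt_inv h).comp_hasFDerivAt (ρ, θ, φ) hden)).arctan
  refine this.congr_fderiv (ContinuousLinearMap.ext fun w => ?_)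
  have hA := (cos_sq_add_sin_sq_mul_cos_sq_pos h).ne'
  have hs : sin ρ ≠ 0 := left_ne_zero_of_mul h
  have hc : cos θ ≠ 0 := right_ne_zero_of_mul h
  simp only [Function.comp_apply, mul_inv_rev, one_div, smul_add, neg_smul, smul_neg, add_apply,
    neg_apply, smul_apply, dθ_apply, smul_eq_mul, neg_mul, mul_neg, neg_neg, dρ_apply, sub_apply]
  field_simp
  linear_combination -(cos θ * w.1 * (cos ρ ^ 2 + sin ρ ^ 2 * cos θ ^ 2)) * cos_sq_add_sin_sq ρ

theorem hasFDerivAt_chiMap_snd_fst {ρ θ φ : ℝ} (hA : 0 < cos ρ ^ 2 + sin ρ ^ 2 * cos θ ^ 2)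
    (hS : 0 < sin ρ * sin θ) :
    HasFDerivAt (fun q => (chiMap q).2.1)
      ((√(cos ρ ^ 2 + sin ρ ^ 2 * cos θ ^ 2))⁻¹ • ((cos ρ * sin θ) • dρ + (sin ρ * cos θ) • dθ))
      (ρ, θ, φ) := by
  have hA1 : √(cos ρ ^ 2 + sin ρ ^ 2 * cos θ ^ 2) ^ 2 = cos ρ ^ 2 + sin ρ ^ 2 * cos θ ^ 2 :=
    sq_sqrt hA.le
  have hr : √(1 - √(cos ρ ^ 2 + sin ρ ^ 2 * cos θ ^ 2) ^ 2) = sin ρ * sin θ := by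
    rw [hA1, cos_sq_add_sin_sq_mul_cos_sq_eq_one_sub, sub_sub_cancel, sqrt_sq hS.le]
  have hr0 : 0 < √(cos ρ ^ 2 + sin ρ ^ 2 * cos θ ^ 2) := sqrt_pos.2 hA
  have hr1 : √(cos ρ ^ 2 + sin ρ ^ 2 * cos θ ^ 2) ≠ 1 := by
    intro h1
    rw [h1, one_pow, sub_self, sqrt_zero] at hr
    linarith
  have hArg := (((hasFDerivAt_dρ (ρ, θ, φ)).cos.pow 2).add
    (((hasFDerivAt_dρ (ρ, θ, φ)).sin.pow 2).fun_mul
      ((hasFDerivAt_dθ (ρ, θ, φ)).cos.pow 2))).sqrt hA.ne'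
  have := (hasDerivAt_arccos (by linarith) hr1).comp_hasFDerivAt (ρ, θ, φ) hArg
  refine this.congr_fderiv (ContinuousLinearMap.ext fun w => ?_)
  have hsinρ : sin ρ ≠ 0 := left_ne_zero_of_mul hS.ne'
  have hsinθ : sin θ ≠ 0 := right_ne_zero_of_mul hS.ne'
  simp only [hr, one_div, mul_inv_rev, Pi.add_apply, Nat.add_one_sub_one, pow_one, nsmul_eq_mul,
    Nat.cast_ofNat, smul_add, neg_smul, add_apply, neg_apply, smul_apply, dρ_apply, smul_eq_mul,
    neg_mul, mul_neg, neg_neg, dθ_apply]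
  field_simp
  linear_combination -(cos ρ * w.1) * sin_sq_add_cos_sq θ

theorem fderiv_chiMap_apply {ρ θ φ : ℝ} (h : sin ρ * cos θ ≠ 0) (hS : 0 < sin ρ * sin θ)
    (w : ℝ × ℝ × ℝ) :
    fderiv ℝ chiMap (ρ, θ, φ) w =
      ((cos ρ * sin ρ * sin θ * w.2.1 - cos θ * w.1) / (cos ρ ^ 2 + sin ρ ^ 2 * cos θ ^ 2),
        (cos ρ * sin θ * w.1 + sin ρ * cos θ * w.2.1) / √(cos ρ ^ 2 + sin ρ ^ 2 * cos θ ^ 2),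
        (cos ρ * sin ρ * sin θ * w.2.1 - cos θ * w.1) / (cos ρ ^ 2 + sin ρ ^ 2 * cos θ ^ 2) -
          w.2.2) := by
  have hχ : HasFDerivAt chiMap _ (ρ, θ, φ) :=
    (hasFDerivAt_chiMap_fst h).prodMk
      ((hasFDerivAt_chiMap_snd_fst (cos_sq_add_sin_sq_mul_cos_sq_pos h) hS).prodMk
        ((hasFDerivAt_chiMap_fst h).sub (hasFDerivAt_dφ _)))
  rw [hχ.fderiv]
  simp [div_eq_inv_mul, mul_add]

theorem sin_chiMap_snd_fst (q : ℝ × ℝ × ℝ) : sin (chiMap q).2.1 = |sin q.1 * sin q.2.1| := by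
  have hA : 0 ≤ cos q.1 ^ 2 + sin q.1 ^ 2 * cos q.2.1 ^ 2 := by positivity
  rw [chiMap, sin_arccos, sq_sqrt hA, cos_sq_add_sin_sq_mul_cos_sq_eq_one_sub, sub_sub_cancel,
    sqrt_sq_eq_abs]

theorem mul_div_sq_add_div_sqrt_sq {ρ θ : ℝ} (hA : 0 < cos ρ ^ 2 + sin ρ ^ 2 * cos θ ^ 2)
    (a b : ℝ) :
    (cos ρ ^ 2 + sin ρ ^ 2 * cos θ ^ 2) *
        ((cos ρ * sin ρ * sin θ * b - cos θ * a) / (cos ρ ^ 2 + sin ρ ^ 2 * cos θ ^ 2)) ^ 2 +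
      ((cos ρ * sin θ * a + sin ρ * cos θ * b) / √(cos ρ ^ 2 + sin ρ ^ 2 * cos θ ^ 2)) ^ 2 =
      a ^ 2 + sin ρ ^ 2 * b ^ 2 := by
  have hA' : cos ρ ^ 2 + sin ρ ^ 2 * cos θ ^ 2 = (cos ρ * sin θ) ^ 2 + cos θ ^ 2 := by
    linear_combination cos θ ^ 2 * cos_sq_add_sin_sq ρ - cos ρ ^ 2 * sin_sq_add_cos_sq θ
  rw [div_pow, div_pow, sq_sqrt hA.le]
  field_simp
  rw [hA']
  ring

theorem sq_add_sq_add_mul_sub_sq_sub (x y z σ : ℝ) :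
    x ^ 2 + y ^ 2 + σ * ((x - z) ^ 2 - 2 * (x - z) * x) = (1 - σ) * x ^ 2 + y ^ 2 + σ * z ^ 2 := by
  ring

/-- Elliptic case, second explicit coordinate transformation: `χ` transforms the metric
`(1/λ²)[dρ̃² + dθ̃² + sin²θ̃(dφ̃² − 2dφ̃dρ̃)]` into the round metric of radius `1/λ`,
`(1/λ²)[dρ² + sin²ρ(dθ² + sin²θ dφ²)]`. -/
theorem stmt13 :
    ∀ q : ℝ × ℝ × ℝ, q ∈ {q : ℝ × ℝ × ℝ | q.1 ∈ Set.Ioo 0 Real.pi ∧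
        q.2.1 ∈ Set.Ioo 0 (Real.pi / 2)} →
      ∀ lam : ℝ, 0 < lam → ∀ w : ℝ × ℝ × ℝ,
        (1 / lam ^ 2) *
            ((fderiv ℝ chiMap q w).1 ^ 2 + (fderiv ℝ chiMap q w).2.1 ^ 2 +
              Real.sin (chiMap q).2.1 ^ 2 *
                ((fderiv ℝ chiMap q w).2.2 ^ 2 -
                  2 * (fderiv ℝ chiMap q w).2.2 * (fderiv ℝ chiMap q w).1)) =
          (1 / lam ^ 2) *
            (w.1 ^ 2 + Real.sin q.1 ^ 2 * (w.2.1 ^ 2 + Real.sin q.2.1 ^ 2 * w.2.2 ^ 2)) := by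
  rintro ⟨ρ, θ, φ⟩ ⟨⟨hρ₀, hρπ⟩, hθ₀, hθπ⟩ lam - ⟨a, b, c⟩
  have hsinρ : 0 < sin ρ := sin_pos_of_pos_of_lt_pi hρ₀ hρπ
  have hsinθ : 0 < sin θ := sin_pos_of_pos_of_lt_pi hθ₀ (by linarith [pi_pos])
  have hcosθ : 0 < cos θ := cos_pos_of_mem_Ioo ⟨by linarith [pi_pos], hθπ⟩
  have hA := cos_sq_add_sin_sq_mul_cos_sq_pos (mul_pos hsinρ hcosθ).ne'
  rw [fderiv_chiMap_apply (mul_pos hsinρ hcosθ).ne' (mul_pos hsinρ hsinθ), sin_chiMap_snd_fst,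
    sq_abs]
  congr 1
  rw [sq_add_sq_add_mul_sub_sq_sub, ← cos_sq_add_sin_sq_mul_cos_sq_eq_one_sub,
    mul_div_sq_add_div_sqrt_sq hA]
  ring

end
end
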